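/- Let Γ ↷ X and Λ ↷ Y be actions of countable discrete groups on second-countable locally compact Hausdorff spaces, let h : X → Y be a homeomorphism and φ : X × Γ → Λ a continuous map, and define Θ : X × Γ → Y × Λ by Θ(x,γ) := (h(x), φ(x,γ)). Then the following are equivalent: (a) Θ is an isomorphism of the transformation groupoids X ⋊ Γ and Y ⋊ Λ, i.e. Θ is a bijection, Θ⁻¹ is continuous, h(xγ) = h(x)φ(x,γ) for all x ∈ X and γ ∈ Γ, and φ(x,γγ') = φ(x,γ)φ(xγ,γ') for all x, γ, γ'; (b) φ is a cocycle, (h,φ) preserves stabilizers, and there is a continuous map η : Y × Λ → Γ such that (h,φ,η) is a continuous orbit equivalence. -/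

import Mathlib

open Set

variable {X Y Γ Λ : Type*}

/-- The stabilizer of `x` for a right action `a : X → Γ → X`. -/
def Stab (a : X → Γ → X) (x : X) : Set Γ := {γ | a x γ = x}

/-- The essential stabilizer of `x`: elements acting as the identity on a
neighbourhood of `x`. -/
def StabEss [TopologicalSpace X] (a : X → Γ → X) (x : X) : Set Γ :=
  {γ | ∃ U : Set X, IsOpen U ∧ x ∈ U ∧ ∀ y ∈ U, a y γ = y}

/-- The action is topologically free if the points with trivial stabilizer are dense. -/
def TopFree [TopologicalSpace X] [One Γ] (a : X → Γ → X) : Prop :=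
  Dense {x : X | ∀ γ : Γ, a x γ = x → γ = 1}

/-- `φ : X × Γ → Λ` is a cocycle for the action `a`. -/
def IsCocycle [Mul Γ] [Mul Λ] (a : X → Γ → X) (φ : X × Γ → Λ) : Prop :=
  ∀ (x : X) (γ γ' : Γ), φ (x, γ * γ') = φ (x, γ) * φ (a x γ, γ')

/-- `(h, φ, η)` is a continuous orbit equivalence between the right actions
`a : X → Γ → X` and `b : Y → Λ → Y`. -/
def IsCOE [TopologicalSpace X] [TopologicalSpace Y] [TopologicalSpace Γ] [TopologicalSpace Λ]
    (a : X → Γ → X) (b : Y → Λ → Y) (h : X ≃ₜ Y) (φ : X × Γ → Λ) (η : Y × Λ → Γ) : Prop :=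
  Continuous φ ∧ Continuous η ∧
    (∀ (x : X) (γ : Γ), h (a x γ) = b (h x) (φ (x, γ))) ∧
    (∀ (y : Y) (lam : Λ), h.symm (b y lam) = a (h.symm y) (η (y, lam)))

/-- `(h, φ)` preserves stabilizers. -/
def PreservesStab [TopologicalSpace X] [TopologicalSpace Y]
    (a : X → Γ → X) (b : Y → Λ → Y) (h : X ≃ₜ Y) (φ : X × Γ → Λ) : Prop :=
  ∀ x : X, Set.BijOn (fun γ => φ (x, γ)) (Stab a x) (Stab b (h x))

/-- `(h, φ)` preserves essential stabilizers. -/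
def PreservesStabEss [TopologicalSpace X] [TopologicalSpace Y]
    (a : X → Γ → X) (b : Y → Λ → Y) (h : X ≃ₜ Y) (φ : X × Γ → Λ) : Prop :=
  ∀ x : X, Set.BijOn (fun γ => φ (x, γ)) (StabEss a x) (StabEss b (h x))

/-!
Everything happens fibrewise: `Θ` is bijective iff each `φ (x, ·) : Γ → Λ` is, and for a
cocycle compatible with `h` these fibre maps are bijective iff they restrict to bijections
between stabilizers, once `η` is there to reach every `λ` up to an element of a stabilizer.
Conversely the `Γ`-component of `Θ⁻¹` is an `η`; and `Θ⁻¹` is automatically continuous, since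
with `Γ` and `Λ` discrete its `Γ`-component is `γ` exactly where `φ (h⁻¹ y, γ) = λ`.
-/

open Function

/-- The paper's `Θ : X ⋊ Γ → Y ⋊ Λ`, on underlying sets. -/
def groupoidMap (h : X → Y) (φ : X × Γ → Λ) (p : X × Γ) : Y × Λ := (h p.1, φ p)

theorem groupoidMap_bijective_iff {h : X → Y} (hh : Bijective h) {φ : X × Γ → Λ} :
    Bijective (groupoidMap h φ) ↔ ∀ x, Bijective fun γ => φ (x, γ) := by
  constructor
  · refine fun hΘ x => ⟨fun γ γ' hγ => ?_, fun lam => ?_⟩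
    · exact congrArg Prod.snd (hΘ.1 (a₁ := (x, γ)) (a₂ := (x, γ')) (Prod.ext rfl hγ))
    · obtain ⟨⟨x', γ⟩, hp⟩ := hΘ.2 (h x, lam)
      obtain rfl : x' = x := hh.1 (congrArg Prod.fst hp)
      exact ⟨γ, congrArg Prod.snd hp⟩
  · refine fun hφ => ⟨fun ⟨x, γ⟩ ⟨x', γ'⟩ hp => ?_, fun ⟨y, lam⟩ => ?_⟩
    · obtain rfl : x = x' := hh.1 (congrArg Prod.fst hp)
      rw [(hφ x).1 (congrArg Prod.snd hp)]
    · obtain ⟨x, rfl⟩ := hh.2 y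
      obtain ⟨γ, rfl⟩ := (hφ x).2 lam
      exact ⟨(x, γ), rfl⟩

theorem IsCocycle.apply_one [Group Γ] [Group Λ] {a : X → Γ → X} {φ : X × Γ → Λ}
    (ha1 : ∀ x, a x 1 = x) (hφ : IsCocycle a φ) (x : X) : φ (x, 1) = 1 := by
  have h11 := hφ x 1 1
  rw [mul_one, ha1] at h11
  exact mul_eq_left.mp h11.symm

section OrbitEquivalence

variable [TopologicalSpace X] [TopologicalSpace Y] {a : X → Γ → X} {b : Y → Λ → Y}
  {h : X ≃ₜ Y} {φ : X × Γ → Λ}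

theorem preservesStab_of_bijective (heq : ∀ x γ, h (a x γ) = b (h x) (φ (x, γ)))
    (hφ : ∀ x, Bijective fun γ => φ (x, γ)) : PreservesStab a b h φ := by
  refine fun x => ⟨fun γ hγ => ?_, (hφ x).1.injOn, fun lam hlam => ?_⟩
  · change b (h x) (φ (x, γ)) = h x
    rw [← heq, show a x γ = x from hγ]
  · obtain ⟨γ, rfl⟩ := (hφ x).2 lam
    exact ⟨γ, h.injective ((heq x γ).trans hlam), rfl⟩

theorem isCOE_of_rightInverse [TopologicalSpace Γ] [TopologicalSpace Λ] {Ξ : Y × Λ → X × Γ}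
    (hφ : Continuous φ) (heq : ∀ x γ, h (a x γ) = b (h x) (φ (x, γ))) (hΞ : Continuous Ξ)
    (hΘΞ : RightInverse Ξ (groupoidMap h φ)) : IsCOE a b h φ fun q => (Ξ q).2 := by
  refine ⟨hφ, continuous_snd.comp hΞ, heq, fun y lam => ?_⟩
  have hΘ := hΘΞ (y, lam)
  change h.symm (b y lam) = a (h.symm y) (Ξ (y, lam)).2
  generalize Ξ (y, lam) = p at hΘ ⊢
  obtain ⟨x, γ⟩ := p
  simp only [groupoidMap, Prod.mk.injEq] at hΘ
  obtain ⟨rfl, rfl⟩ := hΘ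
  rw [← heq, h.symm_apply_apply, h.symm_apply_apply]

variable [Group Γ] [Group Λ]

/-- If `φ (x, γ) = φ (x, γ')`, then `γ⁻¹ γ'` lies in the stabilizer of `x γ` and is sent
to `1 = φ (x γ, 1)`, so injectivity on stabilizers forces `γ⁻¹ γ' = 1`. -/
theorem IsCocycle.injective_apply (ha1 : ∀ x, a x 1 = x)
    (ha2 : ∀ x γ γ', a (a x γ) γ' = a x (γ * γ')) (hφ : IsCocycle a φ)
    (heq : ∀ x γ, h (a x γ) = b (h x) (φ (x, γ))) (hps : PreservesStab a b h φ) (x : X) :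
    Injective fun γ => φ (x, γ) := by
  intro γ γ' hγ
  change φ (x, γ) = φ (x, γ') at hγ
  have horbit : a x γ' = a x γ := h.injective (by rw [heq, heq, hγ])
  have hstab : a (a x γ) (γ⁻¹ * γ') = a x γ := by rw [ha2, mul_inv_cancel_left, horbit]
  have hcoc := hφ x γ (γ⁻¹ * γ')
  rw [mul_inv_cancel_left, ← hγ, left_eq_mul, ← hφ.apply_one ha1 (a x γ)] at hcoc
  have hδ : γ⁻¹ * γ' = 1 := (hps (a x γ)).injOn hstab (ha1 _) hcoc
  rw [← mul_inv_cancel_left γ γ', hδ, mul_one]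

/-- Given `λ`, the orbit equivalence produces `γ₀` with `h (x γ₀) = h x λ`; the defect
`φ (x, γ₀)⁻¹ λ` stabilizes `h (x γ₀)`, hence equals `φ (x γ₀, δ)` with `δ` in the stabilizer,
and `φ (x, γ₀ δ) = λ`. -/
theorem IsCocycle.surjective_apply (hb2 : ∀ y lam mu, b (b y lam) mu = b y (lam * mu))
    (hφ : IsCocycle a φ) (heq : ∀ x γ, h (a x γ) = b (h x) (φ (x, γ)))
    (hps : PreservesStab a b h φ) {η : Y × Λ → Γ}
    (hη : ∀ y lam, h.symm (b y lam) = a (h.symm y) (η (y, lam))) (x : X) :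
    Surjective fun γ => φ (x, γ) := by
  intro lam
  set γ₀ := η (h x, lam)
  have horbit : h (a x γ₀) = b (h x) lam := by
    rw [← h.symm_apply_apply x, ← hη, h.apply_symm_apply, h.apply_symm_apply]
  have hstab : b (h (a x γ₀)) ((φ (x, γ₀))⁻¹ * lam) = h (a x γ₀) := by
    rw [heq, hb2, mul_inv_cancel_left, ← horbit, heq]
  obtain ⟨δ, -, hδ⟩ := (hps (a x γ₀)).surjOn hstab
  refine ⟨γ₀ * δ, ?_⟩
  change φ (a x γ₀, δ) = _ at hδ
  change φ (x, γ₀ * δ) = lam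
  rw [hφ, hδ, mul_inv_cancel_left]

end OrbitEquivalence

theorem continuous_symm_ofBijective_groupoidMap [TopologicalSpace X] [TopologicalSpace Y]
    [TopologicalSpace Γ] [DiscreteTopology Γ] [TopologicalSpace Λ] [DiscreteTopology Λ]
    {h : X ≃ₜ Y} {φ : X × Γ → Λ} (hφ : Continuous φ) (hΘ : Bijective (groupoidMap h φ)) :
    Continuous (Equiv.ofBijective _ hΘ).symm := by
  set e := Equiv.ofBijective _ hΘ
  have hΘe : ∀ q, h (e.symm q).1 = q.1 ∧ φ (e.symm q) = q.2 := fun q =>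
    Prod.ext_iff.1 (e.apply_symm_apply q)
  have hfst : ∀ q, (e.symm q).1 = h.symm q.1 := fun q => h.eq_symm_apply.2 (hΘe q).1
  have hsnd : ∀ q γ, (e.symm q).2 = γ ↔ φ (h.symm q.1, γ) = q.2 := fun q γ => by
    rw [← and_iff_right (b := (e.symm q).2 = γ) (hfst q), ← Prod.ext_iff (y := (h.symm q.1, γ)),
      e.symm_apply_eq, Prod.ext_iff]
    simp [e, groupoidMap, eq_comm]
  have hsymm : ⇑e.symm = fun q => (h.symm q.1, (e.symm q).2) :=
    funext fun q => Prod.ext (hfst q) rfl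
  refine hsymm ▸ (h.symm.continuous.comp continuous_fst).prodMk
    (continuous_discrete_rng.2 fun γ => ?_)
  rw [show (fun q => (e.symm q).2) ⁻¹' {γ} = {q | φ (h.symm q.1, γ) = q.2} from
    Set.ext fun q => hsnd q γ]
  exact ((hφ.comp ((h.symm.continuous.comp continuous_fst).prodMk continuous_const)).prodMk
    continuous_snd).isOpen_preimage {p : Λ × Λ | p.1 = p.2} (isOpen_discrete _)

theorem stmt5_general [TopologicalSpace X] [TopologicalSpace Y]
    [Group Γ] [TopologicalSpace Γ] [DiscreteTopology Γ]
    [Group Λ] [TopologicalSpace Λ] [DiscreteTopology Λ]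
    (a : X → Γ → X) (b : Y → Λ → Y)
    (ha1 : ∀ x : X, a x 1 = x) (ha2 : ∀ (x : X) (γ γ' : Γ), a (a x γ) γ' = a x (γ * γ'))
    (hb2 : ∀ (y : Y) (lam mu : Λ), b (b y lam) mu = b y (lam * mu))
    (h : X ≃ₜ Y) (φ : X × Γ → Λ) (hφ : Continuous φ) :
    (Function.Bijective (fun p : X × Γ => ((h p.1, φ p) : Y × Λ)) ∧
      (∃ Ξ : Y × Λ → X × Γ, Continuous Ξ ∧
        ∀ p : X × Γ, Ξ (h p.1, φ p) = p) ∧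
      (∀ (x : X) (γ : Γ), h (a x γ) = b (h x) (φ (x, γ))) ∧
      IsCocycle a φ) ↔
    (IsCocycle a φ ∧ PreservesStab a b h φ ∧
      ∃ η : Y × Λ → Γ, IsCOE a b h φ η) := by
  constructor
  · rintro ⟨hΘ, ⟨Ξ, hΞ, hΞΘ⟩, heq, hcoc⟩
    have hΘΞ : RightInverse Ξ (groupoidMap h φ) :=
      LeftInverse.rightInverse_of_surjective hΞΘ hΘ.2
    exact ⟨hcoc, preservesStab_of_bijective heq ((groupoidMap_bijective_iff h.bijective).1 hΘ),
      _, isCOE_of_rightInverse hφ heq hΞ hΘΞ⟩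
  · rintro ⟨hcoc, hps, η, -, -, heq, hη⟩
    have hΘ : Bijective (groupoidMap h φ) := (groupoidMap_bijective_iff h.bijective).2 fun x =>
      ⟨hcoc.injective_apply ha1 ha2 heq hps x, hcoc.surjective_apply hb2 heq hps hη x⟩
    exact ⟨hΘ, ⟨_, continuous_symm_ofBijective_groupoidMap hφ hΘ,
      (Equiv.ofBijective _ hΘ).symm_apply_apply⟩, heq, hcoc⟩

theorem stmt5 [TopologicalSpace X] [SecondCountableTopology X] [LocallyCompactSpace X] [T2Space X]
    [TopologicalSpace Y] [SecondCountableTopology Y] [LocallyCompactSpace Y] [T2Space Y]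
    [Group Γ] [Countable Γ] [TopologicalSpace Γ] [DiscreteTopology Γ]
    [Group Λ] [Countable Λ] [TopologicalSpace Λ] [DiscreteTopology Λ]
    (a : X → Γ → X) (b : Y → Λ → Y)
    (ha1 : ∀ x : X, a x 1 = x) (ha2 : ∀ (x : X) (γ γ' : Γ), a (a x γ) γ' = a x (γ * γ'))
    (hacont : Continuous fun p : X × Γ => a p.1 p.2)
    (hb1 : ∀ y : Y, b y 1 = y) (hb2 : ∀ (y : Y) (lam mu : Λ), b (b y lam) mu = b y (lam * mu))
    (hbcont : Continuous fun p : Y × Λ => b p.1 p.2)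
    (h : X ≃ₜ Y) (φ : X × Γ → Λ) (hφ : Continuous φ) :
    (Function.Bijective (fun p : X × Γ => ((h p.1, φ p) : Y × Λ)) ∧
      (∃ Ξ : Y × Λ → X × Γ, Continuous Ξ ∧
        ∀ p : X × Γ, Ξ (h p.1, φ p) = p) ∧
      (∀ (x : X) (γ : Γ), h (a x γ) = b (h x) (φ (x, γ))) ∧
      IsCocycle a φ) ↔
    (IsCocycle a φ ∧ PreservesStab a b h φ ∧
      ∃ η : Y × Λ → Γ, IsCOE a b h φ η) :=
  stmt5_general a b ha1 ha2 hb2 h φ hφ
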